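/- Let f be a form of degree 2d with f_{2d,i} > 0 for i = 1,...,n. If Σ_{α∈Δ} |f_α|·(α^α)^{1/2d} / (2d·Π_{i=1}^n f_{2d,i}^{α_i/2d}) ≤ 1, then f is a sum of squares. -/

import Mathlib

/-!
Split `f = ∑ cᵢ Xᵢ^{2d} + ∑_{α ∈ Δ} f_α X^α + g`, where every monomial of `g` is a nonnegative
multiple of a square. With `κ_α` the summand of the hypothesis indexed by `α`, the diagonal
splits as `(1 - ∑ κ_α) ∑ cᵢ Xᵢ^{2d} + ∑_α κ_α ∑ cᵢ Xᵢ^{2d}`, and each block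
`κ_α ∑ cᵢ Xᵢ^{2d} + f_α X^α` is a sum of squares: after rescaling the variables it is a convex
combination of the AM–GM forms `∑ (αᵢ / 2d) yᵢ^{2d} ∓ y^α` (the sign `+` comes from negating a
variable of odd exponent, or for free when `X^α` is a square), and these are sums of squares by
Hurwitz's inductive identity.
-/

theorem IsSumSq.multiset_sum {R : Type*} [AddCommMonoid R] [Mul R] {s : Multiset R}
    (h : ∀ x ∈ s, IsSumSq x) : IsSumSq s.sum := by
  simpa using multiset_sum_mem (S := AddSubmonoid.sumSq R) s h

@[to_additive]
theorem Finsupp.prod_toMultiset_map {ι M : Type*} [Fintype ι] [CommMonoid M] (α : ι →₀ ℕ)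
    (g : ι → M) : (α.toMultiset.map g).prod = ∏ i, g i ^ α i := by
  classical
  rw [Finset.prod_multiset_map_count, Finsupp.toFinset_toMultiset]
  simp only [Finsupp.count_toMultiset]
  exact Finset.prod_subset (Finset.subset_univ _) fun i _ hi => by
    rw [Finsupp.notMem_support_iff.mp hi, pow_zero]

theorem prod_update_neg_pow_of_odd {ι R : Type*} [Fintype ι] [DecidableEq ι] [CommRing R]
    (t : ι → R) (α : ι → ℕ) {j : ι} (hj : Odd (α j)) :
    ∏ i, Function.update t j (-t j) i ^ α i = -∏ i, t i ^ α i := by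
  rw [← Finset.mul_prod_erase _ _ (Finset.mem_univ j),
    ← Finset.mul_prod_erase _ _ (Finset.mem_univ j), Function.update_self, hj.neg_pow, neg_mul]
  congr 2
  exact Finset.prod_congr rfl fun i hi => by rw [Function.update_of_ne (Finset.ne_of_mem_erase hi)]

section Algebra

variable {A : Type*} [CommRing A]

theorem isSumSq_two_var_agm (x y : A) (e : ℕ) :
    IsSumSq (e * x ^ (2 * e + 2) + y ^ (2 * e + 2) - (e + 1) * (x ^ (2 * e) * y ^ 2)) := by
  induction e with
  | zero => simp
  | succ e ih =>
    have key : ((e + 1 : ℕ) : A) * x ^ (2 * (e + 1) + 2) + y ^ (2 * (e + 1) + 2)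
        - ((e + 1 : ℕ) + 1) * (x ^ (2 * (e + 1)) * y ^ 2)
        = y * y * (e * x ^ (2 * e + 2) + y ^ (2 * e + 2) - (e + 1) * (x ^ (2 * e) * y ^ 2))
          + (e + 1 : ℕ) * ((x ^ e * (x ^ 2 - y ^ 2)) * (x ^ e * (x ^ 2 - y ^ 2))) := by
      push_cast; ring
    rw [key]
    exact ((IsSumSq.mul_self y).mul ih).add ((IsSumSq.natCast _).mul (.mul_self _))

variable [Algebra ℝ A]

theorem IsSumSq.smul_of_nonneg {c : ℝ} (hc : 0 ≤ c) {p : A} (hp : IsSumSq p) :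
    IsSumSq (c • p) := by
  rw [Algebra.smul_def, ← Real.mul_self_sqrt hc, map_mul]
  exact (IsSumSq.mul_self _).mul hp

theorem IsSumSq.add_smul_of_abs_le {p q : A} {M c : ℝ} (hsub : IsSumSq (p - M • q))
    (hadd : IsSumSq (p + M • q)) (hc : |c| ≤ M) : IsSumSq (p + c • q) := by
  obtain rfl | hM := (abs_nonneg c |>.trans hc).eq_or_lt
  · simpa [abs_nonpos_iff.mp hc] using hsub
  have hθ := abs_le.mp hc
  have key : p + c • q = ((M + c) / (2 * M)) • (p + M • q) + ((M - c) / (2 * M)) • (p - M • q) := by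
    match_scalars <;> field_simp <;> ring
  rw [key]
  exact (hadd.smul_of_nonneg (by apply div_nonneg <;> linarith)).add
    (hsub.smul_of_nonneg (by apply div_nonneg <;> linarith))

theorem isSumSq_inv_card_smul_sum_pow_sub_prod_sq (s : Multiset A) (hs : s ≠ 0) :
    IsSumSq ((Multiset.card s : ℝ)⁻¹ • (s.map (· ^ (2 * Multiset.card s))).sum
      - (s.map (· ^ 2)).prod) := by
  induction s using Multiset.induction_on with
  | empty => exact absurd rfl hs
  | cons y t ih =>
    rcases eq_or_ne t 0 with rfl | ht
    · simp
    set d := Multiset.card t with hd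
    have hd0 : (d : ℝ) ≠ 0 := by simpa [d] using ht
    have h1 : algebraMap ℝ A (d : ℝ)⁻¹ * d = 1 := by
      rw [← map_natCast (algebraMap ℝ A), ← map_mul, inv_mul_cancel₀ hd0, map_one]
    have h2 : algebraMap ℝ A ((d : ℝ) + 1)⁻¹ * (d + 1) = 1 := by
      rw [← map_natCast (algebraMap ℝ A), ← map_one (algebraMap ℝ A), ← map_add, ← map_mul,
        inv_mul_cancel₀ (by positivity), map_one]
    rw [Multiset.card_cons, ← hd]
    -- one step of Hurwitz's induction: peel off `y` and pair it with every `x ∈ t`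
    have key : ((d + 1 : ℕ) : ℝ)⁻¹ • ((y ::ₘ t).map (· ^ (2 * (d + 1)))).sum
        - ((y ::ₘ t).map (· ^ 2)).prod
        = y * y * ((d : ℝ)⁻¹ • (t.map (· ^ (2 * d))).sum - (t.map (· ^ 2)).prod)
          + ((d : ℝ)⁻¹ * (d + 1 : ℝ)⁻¹) • (t.map fun x =>
              d * x ^ (2 * d + 2) + y ^ (2 * d + 2) - (d + 1) * (x ^ (2 * d) * y ^ 2)).sum := by
      simp only [Multiset.map_cons, Multiset.sum_cons, Multiset.prod_cons, Multiset.sum_map_sub,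
        Multiset.sum_map_add, Multiset.sum_map_mul_left, Multiset.sum_map_mul_right,
        Multiset.map_const', Multiset.sum_replicate, Algebra.smul_def, map_mul, Nat.cast_add,
        Nat.cast_one]
      linear_combination (-(algebraMap ℝ A ((d : ℝ) + 1)⁻¹ * y ^ (2 * d + 2))
        - algebraMap ℝ A ((d : ℝ) + 1)⁻¹ * (t.map (· ^ (2 * d + 2))).sum) * h1
        + algebraMap ℝ A (d : ℝ)⁻¹ * y ^ 2 * (t.map (· ^ (2 * d))).sum * h2
    rw [key]
    refine ((IsSumSq.mul_self y).mul (ih ht)).add (IsSumSq.smul_of_nonneg (by positivity) ?_)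
    exact IsSumSq.multiset_sum fun _ hx => by
      obtain ⟨x, -, rfl⟩ := Multiset.mem_map.mp hx
      exact isSumSq_two_var_agm x y d

theorem isSumSq_inv_smul_sum_pow_sub_prod (s : Multiset A) {d : ℕ} (hd : d ≠ 0)
    (hs : Multiset.card s = 2 * d) :
    IsSumSq (((2 * d : ℕ) : ℝ)⁻¹ • (s.map (· ^ (2 * d))).sum - s.prod) := by
  obtain ⟨t, hts⟩ := Multiset.card_pos_iff_exists_mem.mp <| (Multiset.card_powersetCard d s).symm ▸
    Nat.choose_pos (show d ≤ Multiset.card s by omega)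
  obtain ⟨hts, ht⟩ := Multiset.mem_powersetCard.mp hts
  obtain ⟨u, rfl⟩ := Multiset.le_iff_exists_add.mp hts
  have hu : Multiset.card u = d := by rw [Multiset.card_add] at hs; omega
  have Ht := isSumSq_inv_card_smul_sum_pow_sub_prod_sq t (by rintro rfl; simp [eq_comm, hd] at ht)
  have Hu := isSumSq_inv_card_smul_sum_pow_sub_prod_sq u (by rintro rfl; simp [eq_comm, hd] at hu)
  rw [ht, Multiset.prod_map_pow, Multiset.map_id'] at Ht
  rw [hu, Multiset.prod_map_pow, Multiset.map_id'] at Hu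
  have h2 : algebraMap ℝ A 2⁻¹ * 2 = 1 := by
    rw [← map_ofNat (algebraMap ℝ A), ← map_mul, inv_mul_cancel₀ two_ne_zero, map_one]
  -- `t.prod * u.prod ≤ (t.prod ^ 2 + u.prod ^ 2) / 2`, then AM–GM of squares on `t` and `u`
  have key : ((2 * d : ℕ) : ℝ)⁻¹ • ((t + u).map (· ^ (2 * d))).sum - (t + u).prod
      = (2⁻¹ : ℝ) • (((d : ℝ)⁻¹ • (t.map (· ^ (2 * d))).sum - t.prod ^ 2)
        + ((d : ℝ)⁻¹ • (u.map (· ^ (2 * d))).sum - u.prod ^ 2)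
        + (t.prod - u.prod) * (t.prod - u.prod)) := by
    rw [show ((2 * d : ℕ) : ℝ)⁻¹ = 2⁻¹ * (d : ℝ)⁻¹ by push_cast; ring]
    simp only [Multiset.map_add, Multiset.sum_add, Multiset.prod_add, Algebra.smul_def, map_mul]
    linear_combination (t.prod * u.prod) * h2
  rw [key]
  exact ((Ht.add Hu).add (.mul_self _)).smul_of_nonneg (by norm_num : (0 : ℝ) ≤ 2⁻¹)

section Diagonal

variable {ι : Type*} [Fintype ι]

theorem isSumSq_sum_smul_pow_two_mul {w : ι → ℝ} (hw : ∀ i, 0 ≤ w i) (x : ι → A) (d : ℕ) :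
    IsSumSq (∑ i, w i • x i ^ (2 * d)) :=
  IsSumSq.sum fun i _ => by
    rw [mul_comm, pow_mul, sq]
    exact (IsSumSq.mul_self _).smul_of_nonneg (hw i)

theorem isSumSq_sum_smul_pow_sub_smul_prod_pow (α : ι →₀ ℕ) {d : ℕ} (hd : d ≠ 0)
    (hα : α.degree = 2 * d) (t : ι → ℝ) (x : ι → A) :
    IsSumSq (∑ i, ((α i : ℝ) / (2 * d : ℕ) * t i ^ (2 * d)) • x i ^ (2 * d)
      - (∏ i, t i ^ α i) • ∏ i, x i ^ α i) := by
  have h := isSumSq_inv_smul_sum_pow_sub_prod (α.toMultiset.map fun i => t i • x i) hd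
    (by rw [Multiset.card_map, Finsupp.card_toMultiset, ← hα]; rfl)
  rw [Multiset.map_map, Finsupp.sum_toMultiset_map, Finsupp.prod_toMultiset_map] at h
  convert h using 2
  · rw [Finset.smul_sum]
    refine Finset.sum_congr rfl fun i _ => ?_
    simp only [Function.comp_apply, smul_pow, ← Nat.cast_smul_eq_nsmul ℝ, smul_smul]
    ring_nf
  · simp only [Algebra.smul_def, mul_pow, Finset.prod_mul_distrib, map_prod, map_pow]

theorem isSumSq_sum_smul_pow_add_smul_prod_pow (α : ι →₀ ℕ) {d : ℕ} (hd : d ≠ 0)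
    (hα : α.degree = 2 * d) {t w : ι → ℝ}
    (hw : ∀ i, (α i : ℝ) / (2 * d : ℕ) * t i ^ (2 * d) ≤ w i) {c : ℝ}
    (hc : |c| ≤ ∏ i, t i ^ α i) (x : ι → A) :
    IsSumSq (∑ i, w i • x i ^ (2 * d) + c • ∏ i, x i ^ α i) := by
  classical
  have hsub : ∀ t' : ι → ℝ, (∀ i, (α i : ℝ) / (2 * d : ℕ) * t' i ^ (2 * d) ≤ w i) →
      IsSumSq (∑ i, w i • x i ^ (2 * d) - (∏ i, t' i ^ α i) • ∏ i, x i ^ α i) := by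
    intro t' ht'
    have key : ∑ i, w i • x i ^ (2 * d) - (∏ i, t' i ^ α i) • ∏ i, x i ^ α i
        = (∑ i, ((α i : ℝ) / (2 * d : ℕ) * t' i ^ (2 * d)) • x i ^ (2 * d)
            - (∏ i, t' i ^ α i) • ∏ i, x i ^ α i)
          + ∑ i, (w i - (α i : ℝ) / (2 * d : ℕ) * t' i ^ (2 * d)) • x i ^ (2 * d) := by
      simp only [sub_smul, Finset.sum_sub_distrib]
      abel
    rw [key]
    exact (isSumSq_sum_smul_pow_sub_smul_prod_pow α hd hα t' x).add
      (isSumSq_sum_smul_pow_two_mul (fun i => sub_nonneg.mpr (ht' i)) x d)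
  refine IsSumSq.add_smul_of_abs_le (hsub t hw) ?_ hc
  by_cases hodd : ∃ j, Odd (α j)
  · obtain ⟨j, hj⟩ := hodd
    have h := hsub (Function.update t j (-t j)) fun i => by
      rcases eq_or_ne i j with rfl | hi
      · simpa [Function.update_self, Even.neg_pow (even_two_mul d)] using hw i
      · simpa [Function.update_of_ne hi] using hw i
    rwa [prod_update_neg_pow_of_odd t α hj, neg_smul, sub_neg_eq_add] at h
  · simp only [not_exists, Nat.not_odd_iff_even] at hodd
    obtain ⟨q, hq⟩ := Finset.isSquare_prod (s := Finset.univ) (fun i => x i ^ α i)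
      fun i _ => (hodd i).isSquare_pow (x i)
    have key : ∑ i, w i • x i ^ (2 * d) + (∏ i, t i ^ α i) • ∏ i, x i ^ α i
        = (∑ i, w i • x i ^ (2 * d) - (∏ i, t i ^ α i) • ∏ i, x i ^ α i)
          + (2 * ∏ i, t i ^ α i) • (q * q) := by
      rw [← hq]
      module
    rw [key]
    exact (hsub t hw).add ((IsSumSq.mul_self q).smul_of_nonneg
      (by linarith [abs_nonneg c]))

/-- The share of the diagonal `∑ cᵢ • xᵢ ^ m` that AM–GM needs to absorb the term `a • x ^ α`. -/
noncomputable def diagonalShare (m : ℕ) (c : ι → ℝ) (α : ι →₀ ℕ) (a : ℝ) : ℝ :=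
  |a| * (∏ j, ((α j : ℕ) : ℝ) ^ (α j)) ^ (1 / (m : ℝ)) /
    ((m : ℝ) * ∏ i, c i ^ (((α i : ℕ) : ℝ) / (m : ℝ)))

theorem diagonalShare_nonneg (m : ℕ) {c : ι → ℝ} (hc : ∀ i, 0 ≤ c i) (α : ι →₀ ℕ) (a : ℝ) :
    0 ≤ diagonalShare m c α a := by
  unfold diagonalShare
  have hα : 0 ≤ ∏ j, ((α j : ℕ) : ℝ) ^ (α j) := by positivity
  have hc' : 0 ≤ ∏ i, c i ^ (((α i : ℕ) : ℝ) / (m : ℝ)) :=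
    Finset.prod_nonneg fun i _ => Real.rpow_nonneg (hc i) _
  positivity

theorem exists_pow_le_diagonalShare_mul (α : ι →₀ ℕ) {m : ℕ} (hm : m ≠ 0) (hα : α.degree = m)
    {c : ι → ℝ} (hc : ∀ i, 0 < c i) (a : ℝ) :
    ∃ t : ι → ℝ, (∀ i, (α i : ℝ) / m * t i ^ m ≤ diagonalShare m c α a * c i) ∧
      ∏ i, t i ^ α i = |a| := by
  set κ := diagonalShare m c α a
  have hκ : 0 ≤ κ := diagonalShare_nonneg m (fun i => (hc i).le) α a
  have hm' : (m : ℝ) ≠ 0 := Nat.cast_ne_zero.mpr hm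
  have hbase : ∀ i, 0 ≤ m * κ * c i / α i := fun i => by have := (hc i).le; positivity
  refine ⟨fun i => (m * κ * c i / α i) ^ ((m : ℝ)⁻¹), fun i => ?_, ?_⟩
  · rw [Real.rpow_inv_natCast_pow (hbase i) hm]
    rcases eq_or_ne (α i) 0 with hi | hi
    · simp only [hi, Nat.cast_zero, zero_div, zero_mul]
      exact mul_nonneg hκ (hc i).le
    · exact le_of_eq (by field_simp)
  · have hpow : ∀ i, ((m * κ * c i / α i) ^ ((m : ℝ)⁻¹)) ^ α i
        = (m * κ) ^ ((α i : ℝ) / m) * (c i ^ ((α i : ℝ) / m) / (α i : ℝ) ^ ((α i : ℝ) / m)) := by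
      intro i
      rw [← Real.rpow_natCast, ← Real.rpow_mul (hbase i), mul_div_assoc,
        Real.mul_rpow (by positivity) (div_nonneg (hc i).le (Nat.cast_nonneg _)),
        Real.div_rpow (hc i).le (Nat.cast_nonneg _), inv_mul_eq_div]
    have hsum : ∑ i, (α i : ℝ) / m = 1 := by
      rw [← Finset.sum_div, ← Nat.cast_sum, ← Finsupp.degree_eq_sum, hα, div_self hm']
    have hα_pos : 0 < ∏ j, ((α j : ℕ) : ℝ) ^ (α j) :=
      Finset.prod_pos fun j _ => by exact_mod_cast Nat.pow_self_pos
    have hαα : ∏ i, (α i : ℝ) ^ ((α i : ℝ) / m)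
        = (∏ j, ((α j : ℕ) : ℝ) ^ (α j)) ^ (1 / (m : ℝ)) := by
      rw [← Real.finsetProd_rpow _ _ fun j _ => by positivity]
      refine Finset.prod_congr rfl fun j _ => ?_
      rw [← Real.rpow_natCast, ← Real.rpow_mul (Nat.cast_nonneg _), mul_one_div]
    simp only [hpow, Finset.prod_mul_distrib, Finset.prod_div_distrib]
    rw [← Real.rpow_sum_of_nonneg (by positivity) fun i _ => by positivity, hsum, Real.rpow_one,
      hαα]
    have hc_pos : 0 < ∏ i, c i ^ (((α i : ℕ) : ℝ) / (m : ℝ)) :=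
      Finset.prod_pos fun i _ => Real.rpow_pos_of_pos (hc i) _
    simp only [κ, diagonalShare]
    field_simp

theorem isSumSq_of_sum_diagonalShare_le_one {d : ℕ} (hd : d ≠ 0) {c : ι → ℝ}
    (hc : ∀ i, 0 < c i) {Δ : Finset (ι →₀ ℕ)} (hΔ : ∀ α ∈ Δ, α.degree = 2 * d)
    (a : (ι →₀ ℕ) → ℝ) (hsum : ∑ α ∈ Δ, diagonalShare (2 * d) c α (a α) ≤ 1) (x : ι → A) :
    IsSumSq (∑ i, c i • x i ^ (2 * d) + ∑ α ∈ Δ, a α • ∏ i, x i ^ α i) := by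
  set κ := fun α => diagonalShare (2 * d) c α (a α)
  have key : ∑ i, c i • x i ^ (2 * d) + ∑ α ∈ Δ, a α • ∏ i, x i ^ α i
      = ∑ i, ((1 - ∑ α ∈ Δ, κ α) * c i) • x i ^ (2 * d)
        + ∑ α ∈ Δ, (∑ i, (κ α * c i) • x i ^ (2 * d) + a α • ∏ i, x i ^ α i) := by
    rw [Finset.sum_add_distrib, Finset.sum_comm (s := Δ), ← add_assoc, ← Finset.sum_add_distrib]
    congr 1
    refine Finset.sum_congr rfl fun i _ => ?_
    rw [← Finset.sum_smul, ← add_smul, ← Finset.sum_mul]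
    ring_nf
  rw [key]
  refine (isSumSq_sum_smul_pow_two_mul (fun i => mul_nonneg (sub_nonneg.mpr hsum) (hc i).le) x
    d).add (IsSumSq.sum fun α hα => ?_)
  obtain ⟨t, ht, hprod⟩ := exists_pow_le_diagonalShare_mul α (by omega) (hΔ α hα) hc (a α)
  exact isSumSq_sum_smul_pow_add_smul_prod_pow α hd (hΔ α hα) ht hprod.ge x

end Diagonal

end Algebra

namespace MvPolynomial

variable {σ : Type*} [Fintype σ]

theorem monomial_eq_smul_prod {R : Type*} [CommSemiring R] (α : σ →₀ ℕ) (a : R) :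
    monomial α a = a • ∏ i, X i ^ α i := by
  rw [monomial_eq, C_mul', Finsupp.prod_fintype _ _ fun _ => pow_zero _]

theorem isSumSq_monomial {α : σ →₀ ℕ} (hα : ∀ i, Even (α i)) {a : ℝ} (ha : 0 ≤ a) :
    IsSumSq (monomial α a) := by
  rw [monomial_eq_smul_prod]
  exact (Finset.isSquare_prod _ fun i _ => (hα i).isSquare_pow _).isSumSq.smul_of_nonneg ha

theorem isSumSq_of_isSumSq_sum_monomial {f : MvPolynomial σ ℝ} {s : Finset (σ →₀ ℕ)}
    (hs : s ⊆ f.support) (h : IsSumSq (∑ α ∈ s, monomial α (f.coeff α)))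
    (hrest : ∀ α ∈ f.support, α ∉ s → 0 ≤ f.coeff α ∧ ∀ i, Even (α i)) : IsSumSq f := by
  classical
  rw [← f.support_sum_monomial_coeff, ← Finset.sum_sdiff hs]
  refine (IsSumSq.sum fun α hα => ?_).add h
  obtain ⟨hαf, hαs⟩ := Finset.mem_sdiff.mp hα
  exact isSumSq_monomial (hrest α hαf hαs).2 (hrest α hαf hαs).1

end MvPolynomial

open MvPolynomial

/-- Improved Fidalgo–Kovacec criterion: for a form `f` of degree `2d` with
`f_{2d,i} > 0`, if `Σ_{α∈Δ} |f_α|·(α^α)^{1/2d} / (2d·Π_i f_{2d,i}^{α_i/2d}) ≤ 1`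
then `f` is a sum of squares.  (Convention `0^0 = 1`.) -/
theorem fk_improved_criterion_sos {n d : ℕ} (hd : 1 ≤ d)
    (f : MvPolynomial (Fin n) ℝ) (hf : f.IsHomogeneous (2 * d))
    (Δ : Finset (Fin n →₀ ℕ))
    (hΔ : ∀ α, α ∈ Δ ↔ α ∈ f.support ∧ (¬ ∃ i, α = Finsupp.single i (2 * d)) ∧
      (f.coeff α < 0 ∨ ∃ i, Odd (α i)))
    (hpos : ∀ i, 0 < f.coeff (Finsupp.single i (2 * d)))
    (hsum : ∑ α ∈ Δ,
        |f.coeff α| * (∏ j, ((α j : ℕ) : ℝ) ^ (α j)) ^ (1 / ((2 * d : ℕ) : ℝ)) /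
          (((2 * d : ℕ) : ℝ) *
            ∏ i, (f.coeff (Finsupp.single i (2 * d))) ^ (((α i : ℕ) : ℝ) / ((2 * d : ℕ) : ℝ)))
      ≤ 1) :
    IsSumSq f := by
  set V := Finset.univ.image fun i : Fin n => Finsupp.single i (2 * d)
  have hV : ∀ α, α ∈ V ↔ ∃ i, α = Finsupp.single i (2 * d) := by simp [V, eq_comm]
  have hVΔ : Disjoint V Δ :=
    Finset.disjoint_left.mpr fun α hαV hαΔ => ((hΔ α).mp hαΔ).2.1 ((hV α).mp hαV)
  have hsupp : V ∪ Δ ⊆ f.support := Finset.union_subset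
    (fun α hα => by obtain ⟨i, rfl⟩ := (hV α).mp hα; exact mem_support_iff.mpr (hpos i).ne')
    fun α hα => ((hΔ α).mp hα).1
  refine isSumSq_of_isSumSq_sum_monomial hsupp ?_ fun α hαf hαVΔ => ?_
  · rw [Finset.sum_union hVΔ, Finset.sum_image fun i _ j _ h =>
      Finsupp.single_left_injective (by omega) h]
    simp only [← C_mul_X_pow_eq_monomial, C_mul']
    simp only [monomial_eq_smul_prod]
    refine isSumSq_of_sum_diagonalShare_le_one (by omega) hpos (fun α hα => ?_) _ hsum X
    rw [Finsupp.degree_eq_weight_one]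
    exact hf (mem_support_iff.mp ((hΔ α).mp hα).1)
  · rw [Finset.mem_union, not_or, hV, hΔ] at hαVΔ
    simpa only [hαf, hαVΔ.1, not_false_eq_true, true_and, not_or, not_lt, not_exists,
      Nat.not_odd_iff_even] using hαVΔ.2
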